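/- Let ω be a Dini function (a continuous increasing function on [0,∞) with ω(0)=0 and ∫₀ᵗ ω(s)/s ds < ∞ for all t>0). For constants a ∈ (0,1) and b > 1, define ω̃(t) = Σ_{k=0}^∞ a^k (ω(b^k t)·1_{b^k t ≤ 1} + ω(1)·1_{b^k t > 1}). Then ω̃ is also a Dini function, i.e., ω̃ is continuous, increasing, ω̃(0)=0, and ∫₀ᵗ ω̃(s)/s ds < ∞ for all t > 0. -/

import Mathlib

/-!
Write `ω̃ = ∑ₖ aᵏ ω(min (bᵏ t) 1)`. Each summand is a Dini function bounded by `aᵏ ω(1)`, so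
the series converges uniformly, which gives continuity and monotonicity. For the Dini condition
it is enough to integrate over `(0, 1]`, since `ω̃(s)/s` is continuous away from `0`; there the
substitution `u = bᵏ s` below `b⁻ᵏ` gives
`∫₀¹ ω(min (bᵏ s) 1)/s ds = ∫₀¹ ω(u)/u du + k ω(1) log b`, which is summable against `aᵏ`.
-/

open MeasureTheory Set

/-- A Dini function: continuous and increasing on `[0,∞)`, vanishing at `0`,
nonnegative, with `∫₀ᵗ ω(s)/s ds < ∞` for every `t > 0`. -/
def IsDini (ω : ℝ → ℝ) : Prop :=
  ContinuousOn ω (Ici 0) ∧ MonotoneOn ω (Ici 0) ∧ ω 0 = 0 ∧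
  (∀ s ∈ Ici (0:ℝ), 0 ≤ ω s) ∧
  ∀ t > (0:ℝ), IntegrableOn (fun s => ω s / s) (Ioc 0 t)

theorem integrable_tsum_of_summable_integral_norm {α E ι : Type*} [MeasurableSpace α]
    {μ : Measure α} [NormedAddCommGroup E] [Countable ι] {f : ι → α → E}
    (hf : ∀ i, Integrable (f i) μ) (h_meas : AEStronglyMeasurable (fun a => ∑' i, f i a) μ)
    (h_sum : Summable fun i => ∫ a, ‖f i a‖ ∂μ) :
    Integrable (fun a => ∑' i, f i a) μ := by
  refine ⟨h_meas, ?_⟩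
  calc ∫⁻ a, ‖∑' i, f i a‖ₑ ∂μ ≤ ∫⁻ a, ∑' i, ‖f i a‖ₑ ∂μ :=
        lintegral_mono fun a => enorm_tsum_le_tsum_enorm
    _ = ∑' i, ∫⁻ a, ‖f i a‖ₑ ∂μ := lintegral_tsum fun i => (hf i).1.enorm
    _ = ∑' i, ENNReal.ofReal (∫ a, ‖f i a‖ ∂μ) := by
        simp_rw [ofReal_integral_norm_eq_lintegral_enorm (hf _)]
    _ = ENNReal.ofReal (∑' i, ∫ a, ‖f i a‖ ∂μ) :=
        (ENNReal.ofReal_tsum_of_nonneg (fun i => integral_nonneg fun a => norm_nonneg _) h_sum).symm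
    _ < ⊤ := ENNReal.ofReal_lt_top

theorem integrableOn_Ioc_of_integrableOn_Ioc_one {f : ℝ → ℝ} (hf : ContinuousOn f (Ioi 0))
    (h₁ : IntegrableOn f (Ioc 0 1)) (t : ℝ) : IntegrableOn f (Ioc 0 t) := by
  have hIcc : IntegrableOn f (Icc 1 t) :=
    (hf.mono fun s hs => zero_lt_one.trans_le hs.1).integrableOn_Icc
  refine (h₁.union hIcc).mono_set fun s hs => ?_
  rcases le_or_gt s 1 with h | h
  · exact Or.inl ⟨hs.1, h⟩
  · exact Or.inr ⟨h.le, hs.2⟩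

theorem IsDini.of_integrableOn_Ioc_one {ω : ℝ → ℝ} (hcont : ContinuousOn ω (Ici 0))
    (hmono : MonotoneOn ω (Ici 0)) (h₀ : ω 0 = 0)
    (hint : IntegrableOn (fun s => ω s / s) (Ioc 0 1)) : IsDini ω := by
  refine ⟨hcont, hmono, h₀, fun s hs => h₀ ▸ hmono self_mem_Ici hs hs, fun t _ => ?_⟩
  refine integrableOn_Ioc_of_integrableOn_Ioc_one ?_ hint t
  exact (hcont.mono Ioi_subset_Ici_self).div continuousOn_id fun s hs => hs.ne'

theorem intervalIntegral_comp_min_mul_div {ω : ℝ → ℝ}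
    (hω : IntervalIntegrable (fun u => ω u / u) volume 0 1) {c : ℝ} (hc : 1 ≤ c) :
    IntervalIntegrable (fun s => ω (min (c * s) 1) / s) volume 0 1 ∧
      ∫ s in (0:ℝ)..1, ω (min (c * s) 1) / s =
        (∫ u in (0:ℝ)..1, ω u / u) + ω 1 * Real.log c := by
  have hc₀ : 0 < c := zero_lt_one.trans_le hc
  have hc₁ : c⁻¹ ≤ 1 := inv_le_one_of_one_le₀ hc
  have h_near : EqOn (fun s => ω (min (c * s) 1) / s) (fun s => c * (ω (c * s) / (c * s)))
      (uIcc 0 c⁻¹) := by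
    intro s hs
    rw [uIcc_of_le (inv_nonneg.2 hc₀.le)] at hs
    have : c * s ≤ 1 := by
      calc c * s ≤ c * c⁻¹ := by gcongr; exact hs.2
        _ = 1 := mul_inv_cancel₀ hc₀.ne'
    simp only [min_eq_left this, mul_div_mul_left _ _ hc₀.ne', ← mul_div_assoc]
  have h_far : EqOn (fun s => ω (min (c * s) 1) / s) (fun s => ω 1 * s⁻¹) (uIcc c⁻¹ 1) := by
    intro s hs
    rw [uIcc_of_le hc₁] at hs
    have : 1 ≤ c * s := by
      calc 1 = c * c⁻¹ := (mul_inv_cancel₀ hc₀.ne').symm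
        _ ≤ c * s := by gcongr; exact hs.1
    simp only [min_eq_right this, div_eq_mul_inv]
  have hsub : IntervalIntegrable (fun s => ω (c * s) / (c * s)) volume 0 c⁻¹ := by
    simpa [zero_div, one_div] using hω.comp_mul_left (c := c)
  have hint_near : IntervalIntegrable (fun s => ω (min (c * s) 1) / s) volume 0 c⁻¹ :=
    (hsub.const_mul c).congr (h_near.symm.mono uIoc_subset_uIcc)
  have hint_far : IntervalIntegrable (fun s => ω (min (c * s) 1) / s) volume c⁻¹ 1 := by
    refine (IntervalIntegrable.const_mul ?_ (ω 1)).congr (h_far.symm.mono uIoc_subset_uIcc)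
    refine intervalIntegral.intervalIntegrable_inv (fun s hs => ?_) continuousOn_id
    rw [uIcc_of_le hc₁] at hs
    exact ((inv_pos.2 hc₀).trans_le hs.1).ne'
  refine ⟨hint_near.trans hint_far, ?_⟩
  rw [← intervalIntegral.integral_add_adjacent_intervals hint_near hint_far,
    intervalIntegral.integral_congr h_near, intervalIntegral.integral_congr h_far,
    intervalIntegral.integral_const_mul,
    intervalIntegral.mul_integral_comp_mul_left (f := fun u => ω u / u),
    intervalIntegral.integral_const_mul, integral_inv_of_pos (inv_pos.2 hc₀) one_pos]
  simp [hc₀.ne']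

namespace IsDini

variable {ω : ℝ → ℝ}

theorem intervalIntegrable_div (hω : IsDini ω) :
    IntervalIntegrable (fun u => ω u / u) volume 0 1 :=
  (intervalIntegrable_iff_integrableOn_Ioc_of_le zero_le_one).2 (hω.2.2.2.2 1 one_pos)

theorem const_mul (hω : IsDini ω) {a : ℝ} (ha : 0 ≤ a) : IsDini fun t => a * ω t := by
  obtain ⟨hcont, hmono, h₀, hnn, hint⟩ := hω
  refine ⟨continuousOn_const.mul hcont, fun x hx y hy hxy => ?_, by simp [h₀],
    fun s hs => mul_nonneg ha (hnn s hs), fun t ht => ?_⟩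
  · exact mul_le_mul_of_nonneg_left (hmono hx hy hxy) ha
  · simp_rw [mul_div_assoc]
    exact (hint t ht).const_mul a

theorem comp_min_mul (hω : IsDini ω) {c : ℝ} (hc : 1 ≤ c) :
    IsDini fun t => ω (min (c * t) 1) := by
  have hc₀ : 0 ≤ c := zero_le_one.trans hc
  have hmaps : MapsTo (fun t => min (c * t) 1) (Ici 0) (Ici 0) := fun t ht =>
    le_min (mul_nonneg hc₀ ht) zero_le_one
  refine of_integrableOn_Ioc_one (hω.1.comp (by fun_prop) hmaps)
    (fun x hx y hy hxy => hω.2.1 (hmaps hx) (hmaps hy) (by dsimp only; gcongr))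
    (by simp [hω.2.2.1]) ?_
  exact (intervalIntegrable_iff_integrableOn_Ioc_of_le zero_le_one).1
    (intervalIntegral_comp_min_mul_div hω.intervalIntegrable_div hc).1

theorem apply_min_one_le (hω : IsDini ω) {x : ℝ} (hx : 0 ≤ x) : ω (min x 1) ≤ ω 1 :=
  hω.2.1 (le_min hx zero_le_one) (mem_Ici.2 zero_le_one) (min_le_right _ _)

theorem tsum {ι : Type*} [Countable ι] {F : ι → ℝ → ℝ} (hF : ∀ i, IsDini (F i))
    {M : ι → ℝ} (hM : Summable M) (hFM : ∀ i, ∀ t ∈ Ici (0:ℝ), F i t ≤ M i)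
    (hI : Summable fun i => ∫ s in Ioc 0 1, F i s / s) :
    IsDini fun t => ∑' i, F i t := by
  have hnn : ∀ i, ∀ t ∈ Ici (0:ℝ), 0 ≤ F i t := fun i => (hF i).2.2.2.1
  have hsum : ∀ t ∈ Ici (0:ℝ), Summable fun i => F i t := fun t ht =>
    hM.of_nonneg_of_le (fun i => hnn i t ht) (fun i => hFM i t ht)
  have hcont : ContinuousOn (fun t => ∑' i, F i t) (Ici 0) := by
    refine continuousOn_tsum (fun i => (hF i).1) hM fun i t ht => ?_
    rw [Real.norm_of_nonneg (hnn i t ht)]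
    exact hFM i t ht
  refine of_integrableOn_Ioc_one hcont
    (fun x hx y hy hxy => (hsum x hx).tsum_le_tsum (fun i => (hF i).2.1 hx hy hxy) (hsum y hy))
    (by simp [fun i => (hF i).2.2.1]) ?_
  have hmeas : AEStronglyMeasurable (fun s => (∑' i, F i s) / s) (volume.restrict (Ioc 0 1)) :=
    ((hcont.mono (Ioc_subset_Icc_self.trans Icc_subset_Ici_self)).div continuousOn_id
      fun s hs => hs.1.ne').aestronglyMeasurable measurableSet_Ioc
  simp_rw [← tsum_div_const] at hmeas ⊢
  refine integrable_tsum_of_summable_integral_norm (fun i => (hF i).2.2.2.2 1 one_pos) hmeas ?_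
  refine hI.congr fun i => setIntegral_congr_fun measurableSet_Ioc fun s hs => ?_
  exact (Real.norm_of_nonneg (div_nonneg (hnn i s hs.1.le) hs.1.le)).symm

end IsDini

theorem stmt0 (ω : ℝ → ℝ) (hω : IsDini ω) (a b : ℝ) (ha : a ∈ Ioo (0:ℝ) 1)
    (hb : 1 < b) (ω' : ℝ → ℝ)
    (hω' : ∀ t, ω' t = ∑' k : ℕ, a ^ k *
      (if b ^ k * t ≤ 1 then ω (b ^ k * t) else ω 1)) :
    IsDini ω' := by
  obtain ⟨ha₀, ha₁⟩ := ha
  obtain rfl : ω' = fun t => ∑' k : ℕ, a ^ k * ω (min (b ^ k * t) 1) := by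
    funext t
    simp only [hω' t, min_def, apply_ite ω]
  have hbk : ∀ k : ℕ, 1 ≤ b ^ k := fun k => one_le_pow₀ hb.le
  have hgeom : Summable fun k : ℕ => a ^ k := summable_geometric_of_lt_one ha₀.le ha₁
  have hI : ∀ k : ℕ, ∫ s in Ioc 0 1, a ^ k * ω (min (b ^ k * s) 1) / s =
      a ^ k * (∫ u in Ioc 0 1, ω u / u) + ω 1 * Real.log b * (k * a ^ k) := by
    intro k
    simp_rw [mul_div_assoc]
    rw [integral_const_mul, ← intervalIntegral.integral_of_le zero_le_one,
      (intervalIntegral_comp_min_mul_div hω.intervalIntegrable_div (hbk k)).2,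
      intervalIntegral.integral_of_le zero_le_one, Real.log_pow]
    ring
  refine IsDini.tsum (fun k => (hω.comp_min_mul (hbk k)).const_mul (pow_nonneg ha₀.le k))
    (hgeom.mul_right (ω 1)) (fun k t ht => ?_) ?_
  · exact mul_le_mul_of_nonneg_left
      (hω.apply_min_one_le (mul_nonneg (pow_nonneg (zero_le_one.trans hb.le) k) ht))
      (pow_nonneg ha₀.le k)
  · simp_rw [hI]
    refine (hgeom.mul_right _).add (Summable.mul_left _ ?_)
    simpa using
      summable_pow_mul_geometric_of_norm_lt_one 1 (by rwa [Real.norm_of_nonneg ha₀.le])
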